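/- arXiv:1612.09181 — 4 statements merged into one kernel-verified Lean document; each statement's English description precedes it below -/
import Mathlib

section
/- With uniform monomer activity x and nonnegative dimer activities w_{ij}, the partition function Z_G(x) = Σ_D (Π_{ij∈D} w_{ij}) x^{N−2|D|} is a monic polynomial of degree N = |V| in x whose complex zeros are all purely imaginary. -/
open scoped BigOperators
open MeasureTheory Filter Finset

attribute [local instance] Classical.propDecidable

noncomputable section

variable {V : Type*} [Fintype V] [DecidableEq V]

/-- `D` is a monomer-dimer configuration (matching) within the edge set `E`. -/
def IsMatchingIn (E D : Finset (Sym2 V)) : Prop :=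
  D ⊆ E ∧ (∀ e ∈ D, ¬ e.IsDiag) ∧
    ∀ e ∈ D, ∀ f ∈ D, e ≠ f → ∀ v : V, ¬(v ∈ e ∧ v ∈ f)

/-- All matchings of the edge set `E`. -/
def matchingsIn (E : Finset (Sym2 V)) : Finset (Finset (Sym2 V)) :=
  E.powerset.filter (fun D => IsMatchingIn E D)

/-- `M(D)`: the set of vertices not covered by the matching `D` (the monomers). -/
def uncovered (D : Finset (Sym2 V)) : Finset V :=
  Finset.univ.filter (fun v => ∀ e ∈ D, v ∉ e)

/-- `x_i * x_j` for the edge `e = {i,j}`. -/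
def edgeProd (x : V → ℝ) : Sym2 V → ℝ :=
  Sym2.lift ⟨fun a b => x a * x b, fun a b => mul_comm _ _⟩

/-- The monomer-dimer partition function with dimer activities `w` and monomer
activities `x` on the graph with edge set `E`. -/
def partFun (E : Finset (Sym2 V)) (w : Sym2 V → ℝ) (x : V → ℝ) : ℝ :=
  ∑ D ∈ matchingsIn E, (∏ e ∈ D, w e) * ∏ i ∈ uncovered D, x i

/-- The edge set of the complete graph on `V`. -/
def completeEdges (V : Type*) [Fintype V] [DecidableEq V] : Finset (Sym2 V) :=
  Finset.univ.filter (fun e : Sym2 V => ¬ e.IsDiag)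

/-- The matching polynomial `Z_G(x) = Σ_D (Π_{ij∈D} w_{ij}) x^{N−2|D|}` with
complex variable `x`. -/
def matchPoly (E : Finset (Sym2 V)) (w : Sym2 V → ℝ) : Polynomial ℂ :=
  ∑ D ∈ matchingsIn E,
    Polynomial.C (∏ e ∈ D, (w e : ℂ)) * Polynomial.X ^ (Fintype.card V - 2 * D.card)

/-! Heilmann–Lieb. Let `Z_S(z)` be the matching polynomial of the subgraph induced on `S`.
Splitting matchings by whether and how they cover a vertex `v ∈ S` gives
`Z_S = z Z_{S-v} + ∑_{u ~ v} w_{vu} Z_{S-v-u}`. Dividing by `Z_{S-v}`, the ratio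
`Z_S / Z_{S-v}` is `z` plus a nonnegative combination of inverses of ratios
`Z_{S-v} / Z_{S-v-u}`; since inversion preserves the sign of the real part, induction on `S`
shows that for `Re z ≠ 0` every such ratio has real part of the sign of `Re z`, so `Z_S(z) ≠ 0`.
The empty matching contributes `x^N` and every other matching a term of lower degree. -/

section Matchings

variable {α : Type*} {E D D' : Finset (Sym2 α)}

lemma mem_matchingsIn : D ∈ matchingsIn E ↔ IsMatchingIn E D := by
  simp only [matchingsIn, mem_filter, mem_powerset, and_iff_right_iff_imp]
  exact fun h => h.1

lemma IsMatchingIn.mono (hD : IsMatchingIn E D) (h : D' ⊆ D) : IsMatchingIn E D' :=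
  ⟨h.trans hD.1, fun e he => hD.2.1 e (h he),
    fun e he f hf hef => hD.2.2 e (h he) f (h hf) hef⟩

lemma IsMatchingIn.eq_of_mem {e f : Sym2 α} {v : α} (hD : IsMatchingIn E D) (he : e ∈ D)
    (hf : f ∈ D) (hve : v ∈ e) (hvf : v ∈ f) : e = f := by
  by_contra hef
  exact hD.2.2 e he f hf hef v ⟨hve, hvf⟩

lemma isMatchingIn_empty : IsMatchingIn E ∅ :=
  ⟨empty_subset _, by simp, by simp⟩

variable [DecidableEq α]

def coveredVerts (D : Finset (Sym2 α)) : Finset α := D.biUnion Sym2.toFinset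

lemma mem_coveredVerts {v : α} : v ∈ coveredVerts D ↔ ∃ e ∈ D, v ∈ e := by
  simp [coveredVerts]

lemma IsMatchingIn.card_coveredVerts (hD : IsMatchingIn E D) :
    #(coveredVerts D) = 2 * #D := by
  rw [coveredVerts, card_biUnion, sum_congr rfl fun e he =>
    Sym2.card_toFinset_of_not_isDiag e (hD.2.1 e he), sum_const, smul_eq_mul, mul_comm]
  intro e he f hf hef
  simp only [Function.onFun, disjoint_left, Sym2.mem_toFinset]
  exact fun v hve hvf => hef (hD.eq_of_mem he hf hve hvf)

lemma IsMatchingIn.insert {e : Sym2 α} (hD : IsMatchingIn E D) (heE : e ∈ E)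
    (he : ¬ e.IsDiag) (hfree : ∀ v ∈ e, v ∉ coveredVerts D) :
    IsMatchingIn E (insert e D) := by
  refine ⟨insert_subset heE hD.1, ?_, ?_⟩
  · simpa [he] using hD.2.1
  · have hmeet : ∀ f ∈ D, ∀ v, v ∈ e → v ∉ f := fun f hf v hve hvf =>
      hfree v hve (mem_coveredVerts.2 ⟨f, hf, hvf⟩)
    simp only [mem_insert]
    rintro f (rfl | hf) g (rfl | hg) hfg v ⟨hvf, hvg⟩
    · exact hfg rfl
    · exact hmeet g hg v hvf hvg
    · exact hmeet f hf v hvg hvf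
    · exact hD.2.2 f hf g hg hfg v ⟨hvf, hvg⟩

/-- The matchings of the subgraph induced on `S`. -/
def matchingsWithin (E : Finset (Sym2 α)) (S : Finset α) : Finset (Finset (Sym2 α)) :=
  (matchingsIn E).filter (coveredVerts · ⊆ S)

variable {S : Finset α}

lemma mem_matchingsWithin :
    D ∈ matchingsWithin E S ↔ IsMatchingIn E D ∧ coveredVerts D ⊆ S := by
  rw [matchingsWithin, mem_filter, mem_matchingsIn]

lemma two_mul_card_le_of_mem_matchingsWithin (hD : D ∈ matchingsWithin E S) :
    2 * #D ≤ #S := by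
  obtain ⟨hD, hDS⟩ := mem_matchingsWithin.1 hD
  exact hD.card_coveredVerts ▸ card_le_card hDS

lemma matchingsWithin_univ [Fintype α] : matchingsWithin E univ = matchingsIn E :=
  filter_true_of_mem fun _ _ => subset_univ _

lemma matchingsWithin_empty : matchingsWithin E ∅ = {∅} := by
  ext D
  simp only [mem_matchingsWithin, subset_empty, mem_singleton]
  refine ⟨fun ⟨_, hD⟩ => ?_, fun h => ?_⟩
  · exact eq_empty_of_forall_notMem fun e he =>
      notMem_empty _ (hD ▸ mem_coveredVerts.2 ⟨e, he, Sym2.out_fst_mem e⟩)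
  · subst h
    exact ⟨isMatchingIn_empty, by simp [coveredVerts]⟩

lemma filter_notMem_coveredVerts (v : α) :
    (matchingsWithin E S).filter (v ∉ coveredVerts ·) = matchingsWithin E (S.erase v) := by
  ext D
  simp only [mem_filter, mem_matchingsWithin, subset_erase]
  tauto

lemma notMem_of_mem_matchingsWithin {e : Sym2 α} {v : α} (hD : D ∈ matchingsWithin E S)
    (hvS : v ∉ S) (hve : v ∈ e) : e ∉ D := fun he =>
  hvS ((mem_matchingsWithin.1 hD).2 (mem_coveredVerts.2 ⟨e, he, hve⟩))

lemma insert_mem_matchingsWithin {u v : α} (hv : v ∈ S) (hu : u ∈ S.erase v)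
    (huv : s(v, u) ∈ E) (hD : D ∈ matchingsWithin E ((S.erase v).erase u)) :
    insert s(v, u) D ∈ matchingsWithin E S := by
  obtain ⟨hD, hDS⟩ := mem_matchingsWithin.1 hD
  obtain ⟨hne, huS⟩ := mem_erase.1 hu
  refine mem_matchingsWithin.2 ⟨hD.insert huv (by simpa using hne.symm) ?_, ?_⟩
  · intro x hx hxD
    have := mem_erase.1 (hDS hxD)
    rcases Sym2.mem_iff.1 hx with rfl | rfl
    · exact (mem_erase.1 this.2).1 rfl
    · exact this.1 rfl
  · rw [coveredVerts, biUnion_insert, Sym2.toFinset_mk_eq]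
    exact union_subset (insert_subset hv (singleton_subset_iff.2 huS))
      (hDS.trans ((erase_subset _ _).trans (erase_subset _ _)))

lemma erase_mem_matchingsWithin {u v : α} (hD : D ∈ matchingsWithin E S)
    (he : s(v, u) ∈ D) : D.erase s(v, u) ∈ matchingsWithin E ((S.erase v).erase u) := by
  obtain ⟨hD, hDS⟩ := mem_matchingsWithin.1 hD
  refine mem_matchingsWithin.2 ⟨hD.mono (erase_subset _ _), fun x hx => ?_⟩
  obtain ⟨f, hf, hxf⟩ := mem_coveredVerts.1 hx
  obtain ⟨hfe, hfD⟩ := mem_erase.1 hf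
  refine mem_erase.2 ⟨?_, mem_erase.2 ⟨?_, hDS (mem_coveredVerts.2 ⟨f, hfD, hxf⟩)⟩⟩
  · rintro rfl
    exact hfe (hD.eq_of_mem hfD he hxf (Sym2.mem_mk_right _ _))
  · rintro rfl
    exact hfe (hD.eq_of_mem hfD he hxf (Sym2.mem_mk_left _ _))

lemma filter_mem_coveredVerts {v : α} (hv : v ∈ S) :
    (matchingsWithin E S).filter (v ∈ coveredVerts ·) =
      ((S.erase v).filter (s(v, ·) ∈ E)).biUnion fun u =>
        (matchingsWithin E ((S.erase v).erase u)).image (insert s(v, u)) := by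
  ext D
  simp only [mem_filter, mem_biUnion, mem_image]
  constructor
  · rintro ⟨hD, hvD⟩
    obtain ⟨hDm, hDS⟩ := mem_matchingsWithin.1 hD
    obtain ⟨e, he, hve⟩ := mem_coveredVerts.1 hvD
    obtain ⟨u, rfl⟩ := Sym2.mem_iff_exists.1 hve
    have huv : u ≠ v := fun h => hDm.2.1 _ he (by simp [h])
    have huS : u ∈ S := hDS (mem_coveredVerts.2 ⟨_, he, Sym2.mem_mk_right _ _⟩)
    exact ⟨u, ⟨mem_erase.2 ⟨huv, huS⟩, hDm.1 he⟩, D.erase s(v, u),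
      erase_mem_matchingsWithin hD he, insert_erase he⟩
  · rintro ⟨u, ⟨hu, huv⟩, D', hD', rfl⟩
    exact ⟨insert_mem_matchingsWithin hv hu huv hD',
      mem_coveredVerts.2 ⟨_, mem_insert_self _ _, Sym2.mem_mk_left _ _⟩⟩

end Matchings

section Recursion

variable {α : Type*} [DecidableEq α] (E : Finset (Sym2 α)) (w : Sym2 α → ℝ)

/-- The value at `z` of the matching polynomial of the subgraph induced on `S`. -/
def matchPolyOn (S : Finset α) (z : ℂ) : ℂ :=
  ∑ D ∈ matchingsWithin E S, (∏ e ∈ D, (w e : ℂ)) * z ^ (#S - 2 * #D)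

lemma matchPolyOn_empty (z : ℂ) : matchPolyOn E w ∅ z = 1 := by
  simp [matchPolyOn, matchingsWithin_empty]

lemma eval_matchPoly [Fintype α] (z : ℂ) :
    (matchPoly E w).eval z = matchPolyOn E w univ z := by
  simp [matchPoly, matchPolyOn, matchingsWithin_univ, Polynomial.eval_finsetSum,
    Polynomial.eval_prod]

theorem matchPolyOn_eq_of_mem {S : Finset α} {v : α} (hv : v ∈ S) (z : ℂ) :
    matchPolyOn E w S z = z * matchPolyOn E w (S.erase v) z +
      ∑ u ∈ (S.erase v).filter (s(v, ·) ∈ E),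
        (w s(v, u) : ℂ) * matchPolyOn E w ((S.erase v).erase u) z := by
  have hdisj : ((S.erase v).filter (s(v, ·) ∈ E) : Set α).PairwiseDisjoint fun u =>
      (matchingsWithin E ((S.erase v).erase u)).image (insert s(v, u)) := by
    intro u₁ hu₁ u₂ hu₂ hne
    simp only [Function.onFun, disjoint_left, mem_image]
    rintro _ ⟨D₁, hD₁, rfl⟩ ⟨D₂, -, hD⟩
    obtain ⟨hu₁S, hu₁E⟩ := mem_filter.1 hu₁
    have hmatch := (mem_matchingsWithin.1 (insert_mem_matchingsWithin hv hu₁S hu₁E hD₁)).1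
    exact hne (Sym2.congr_right.1 (hmatch.eq_of_mem (mem_insert_self _ _)
      (hD ▸ mem_insert_self _ _) (Sym2.mem_mk_left _ _) (Sym2.mem_mk_left _ _)))
  have hcard : #(S.erase v) + 1 = #S := card_erase_add_one hv
  rw [matchPolyOn, ← sum_filter_not_add_sum_filter _ (v ∈ coveredVerts ·),
    filter_notMem_coveredVerts, filter_mem_coveredVerts hv, sum_biUnion hdisj]
  congr 1
  · rw [matchPolyOn, mul_sum]
    refine sum_congr rfl fun D hD => ?_
    have := two_mul_card_le_of_mem_matchingsWithin hD
    rw [show #S - 2 * #D = #(S.erase v) - 2 * #D + 1 by omega, pow_succ]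
    ring
  · refine sum_congr rfl fun u hu => ?_
    have hu_erase := (mem_filter.1 hu).1
    have hnot : ∀ D ∈ matchingsWithin E ((S.erase v).erase u), s(v, u) ∉ D := fun D hD =>
      notMem_of_mem_matchingsWithin hD (fun h => (mem_erase.1 (mem_erase.1 h).2).1 rfl)
        (Sym2.mem_mk_left _ _)
    rw [sum_image fun D₁ h₁ D₂ h₂ h => by
        rw [← erase_insert (hnot D₁ h₁), h, erase_insert (hnot D₂ h₂)],
      matchPolyOn, mul_sum]
    refine sum_congr rfl fun D hD => ?_
    have := two_mul_card_le_of_mem_matchingsWithin hD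
    have := card_erase_add_one hu_erase
    rw [prod_insert (hnot D hD), card_insert_of_notMem (hnot D hD),
      show #S - 2 * (#D + 1) = #((S.erase v).erase u) - 2 * #D by omega]
    ring

end Recursion

lemma mul_inv_re_pos_of_mul_re_pos {a : ℝ} {c : ℂ} (h : 0 < a * c.re) : 0 < a * c⁻¹.re := by
  have hc : c ≠ 0 := by
    rintro rfl
    simp at h
  rw [Complex.inv_re, mul_div_assoc']
  exact div_pos h (Complex.normSq_pos.2 hc)

section HeilmannLieb

variable {α : Type*} [DecidableEq α] {E : Finset (Sym2 α)} {w : Sym2 α → ℝ}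

theorem matchPolyOn_ne_zero_and_re_mul_re_div_pos (hw : ∀ e ∈ E, 0 ≤ w e) {z : ℂ}
    (hz : z.re ≠ 0) (S : Finset α) :
    matchPolyOn E w S z ≠ 0 ∧
      ∀ v ∈ S, 0 < z.re * (matchPolyOn E w S z / matchPolyOn E w (S.erase v) z).re := by
  induction S using Finset.strongInduction with
  | H S ih =>
  have hratio : ∀ v ∈ S,
      0 < z.re * (matchPolyOn E w S z / matchPolyOn E w (S.erase v) z).re := by
    intro v hv
    obtain ⟨hne, ih_erase⟩ := ih _ (erase_ssubset hv)
    have hterm : ∀ u ∈ (S.erase v).filter (s(v, ·) ∈ E), 0 ≤ z.re *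
        ((w s(v, u) : ℂ) * matchPolyOn E w ((S.erase v).erase u) z /
          matchPolyOn E w (S.erase v) z).re := by
      intro u hu
      obtain ⟨hu, huv⟩ := mem_filter.1 hu
      rw [mul_div_assoc, Complex.re_ofReal_mul, mul_left_comm, ← inv_div]
      exact mul_nonneg (hw _ huv) (mul_inv_re_pos_of_mul_re_pos (ih_erase u hu)).le
    rw [matchPolyOn_eq_of_mem E w hv, add_div, mul_div_assoc, div_self hne, mul_one, sum_div,
      Complex.add_re, Complex.re_sum, mul_add, mul_sum]
    exact add_pos_of_pos_of_nonneg (mul_self_pos.2 hz) (sum_nonneg hterm)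
  refine ⟨?_, hratio⟩
  rcases S.eq_empty_or_nonempty with rfl | ⟨v, hv⟩
  · simp [matchPolyOn_empty]
  · intro h0
    simpa [h0] using hratio v hv

end HeilmannLieb

lemma degree_matchPoly_sub_X_pow_lt {α : Type*} [Fintype α] [DecidableEq α]
    (E : Finset (Sym2 α)) (w : Sym2 α → ℝ) :
    (matchPoly E w - Polynomial.X ^ Fintype.card α).degree < (Fintype.card α : WithBot ℕ) := by
  rw [matchPoly, ← add_sum_erase _ _ (mem_matchingsIn.2 isMatchingIn_empty)]
  simp only [prod_empty, map_one, one_mul, card_empty, mul_zero, Nat.sub_zero,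
    add_sub_cancel_left]
  refine (Polynomial.degree_sum_le _ _).trans_lt
    ((Finset.sup_lt_iff (WithBot.bot_lt_coe _)).2 fun D hD => ?_)
  obtain ⟨hne, hD⟩ := mem_erase.1 hD
  have h2 := two_mul_card_le_of_mem_matchingsWithin (matchingsWithin_univ (E := E) ▸ hD)
  have h1 := card_pos.2 (nonempty_iff_ne_empty.2 hne)
  rw [card_univ] at h2
  exact (Polynomial.degree_C_mul_X_pow_le _ _).trans_lt (Nat.cast_lt.2 (by omega))

theorem matchPoly_monic_degree_zeros_imaginary_general (E : Finset (Sym2 V))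
    (w : Sym2 V → ℝ) (hw : ∀ e ∈ E, 0 ≤ w e) :
    (matchPoly E w).Monic ∧ (matchPoly E w).natDegree = Fintype.card V ∧
      ∀ z : ℂ, (matchPoly E w).eval z = 0 → z.re = 0 := by
  have hlow := degree_matchPoly_sub_X_pow_lt E w
  have hsplit : matchPoly E w =
      Polynomial.X ^ Fintype.card V + (matchPoly E w - Polynomial.X ^ Fintype.card V) :=
    (add_sub_cancel _ _).symm
  refine ⟨hsplit ▸ Polynomial.monic_X_pow_add hlow, ?_, fun z hz => ?_⟩
  · rw [hsplit, Polynomial.natDegree_add_eq_left_of_degree_lt (by rwa [Polynomial.degree_X_pow]),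
      Polynomial.natDegree_X_pow]
  · by_contra hre
    exact (matchPolyOn_ne_zero_and_re_mul_re_div_pos hw hre univ).1 (eval_matchPoly E w z ▸ hz)

/-- with uniform monomer activity `x` and nonnegative dimer weights,
`Z_G` is a monic polynomial of degree `N = |V|` in `x` whose complex zeros are
purely imaginary. -/
theorem matchPoly_monic_degree_zeros_imaginary (E : Finset (Sym2 V))
    (hE : ∀ e ∈ E, ¬ e.IsDiag) (w : Sym2 V → ℝ) (hw : ∀ e ∈ E, 0 ≤ w e) :
    (matchPoly E w).Monic ∧ (matchPoly E w).natDegree = Fintype.card V ∧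
      ∀ z : ℂ, (matchPoly E w).eval z = 0 → z.re = 0 :=
  matchPoly_monic_degree_zeros_imaginary_general E w hw
end
end

section
/- Let Δ be Poisson distributed with parameter c > 0 and let x > √c. If (M_even, M_odd) is a pair of [0,1]-valued random variables, with i.i.d. copies (M_even^{(i)}, M_odd^{(i)}), satisfying the distributional equations M_even =_d x²/(x² + Σ_{i=1}^Δ M_odd^{(i)}) and M_odd =_d x²/(x² + Σ_{i=1}^Δ M_even^{(i)}) (with Δ independent of the copies), then E[|M_even − M_odd|] ≤ (c²/x⁴) E[|M_even − M_odd|]; consequently M_even = M_odd almost surely. -/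
/-! Since `s ↦ x² / (x² + s)` is `x⁻²`-Lipschitz on `[0, ∞)`, the fixed-point equation bounds
`|M_even - M_odd|` in law by `x⁻² ∑_{i < Δ} |M_even⁽ⁱ⁾ - M_odd⁽ⁱ⁾|`. Wald's identity, with
`E[Δ] = c`, turns this into `E|M_even - M_odd| ≤ (c / x²) E|M_even - M_odd|`; as `c < x²` and the
expectation is finite, it vanishes, and the stated inequality holds with both sides zero. -/

open scoped ENNReal NNReal Nat
open MeasureTheory ProbabilityTheory Finset

theorem tsum_ite_lt_eq_sum_range {M : Type*} [AddCommMonoid M] [TopologicalSpace M]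
    (n : ℕ) (a : ℕ → M) : ∑' i, (if i < n then a i else 0) = ∑ i ∈ range n, a i := by
  rw [tsum_eq_sum (s := range n) fun i hi => if_neg (by simpa using hi)]
  exact sum_congr rfl fun i hi => if_pos (mem_range.1 hi)

theorem abs_div_add_sub_div_add_le {a s t : ℝ} (ha : 0 < a) (hs : 0 ≤ s) (ht : 0 ≤ t) :
    |a / (a + s) - a / (a + t)| ≤ |s - t| / a := by
  have hs' : 0 < a + s := by linarith
  have ht' : 0 < a + t := by linarith
  rw [div_sub_div _ _ hs'.ne' ht'.ne', abs_div, abs_of_pos (mul_pos hs' ht'),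
    show a * (a + t) - (a + s) * a = a * (t - s) by ring, abs_mul, abs_of_pos ha,
    abs_sub_comm t s, div_le_div_iff₀ (mul_pos hs' ht') ha]
  nlinarith [mul_nonneg (abs_nonneg (s - t)) (by positivity : 0 ≤ a * s + a * t + s * t)]

theorem abs_div_add_sum_sub_div_add_sum_le {ι : Type*} (s : Finset ι) {a : ℝ} (ha : 0 < a)
    {u v : ι → ℝ} (hu : ∀ i, 0 ≤ u i) (hv : ∀ i, 0 ≤ v i) :
    |a / (a + ∑ i ∈ s, u i) - a / (a + ∑ i ∈ s, v i)| ≤ a⁻¹ * ∑ i ∈ s, |v i - u i| := by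
  calc |a / (a + ∑ i ∈ s, u i) - a / (a + ∑ i ∈ s, v i)|
      ≤ |∑ i ∈ s, u i - ∑ i ∈ s, v i| / a :=
        abs_div_add_sub_div_add_le ha (sum_nonneg fun i _ => hu i) (sum_nonneg fun i _ => hv i)
    _ ≤ a⁻¹ * ∑ i ∈ s, |v i - u i| := by
        rw [div_eq_inv_mul, abs_sub_comm, ← sum_sub_distrib]
        exact mul_le_mul_of_nonneg_left (abs_sum_le_sum_abs _ _) (inv_nonneg.2 ha.le)

theorem ENNReal.eq_zero_of_le_mul_of_lt_one {a k : ℝ≥0∞} (ha : a ≠ ⊤) (hk : k < 1)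
    (h : a ≤ k * a) : a = 0 := by
  by_contra h0
  exact (ENNReal.mul_lt_mul_left h0 ha hk).not_ge (by simpa using h)

theorem hasSum_mean_poissonMeasure (r : ℝ≥0) :
    HasSum (fun n : ℕ => n * (Real.exp (-r) * r ^ n / n !)) r := by
  have shift : (fun n : ℕ => ((n + 1 : ℕ) : ℝ) * (Real.exp (-r) * r ^ (n + 1) / (n + 1)!))
      = fun n => (r : ℝ) * (Real.exp (-r) * r ^ n / n !) := by
    ext n
    rw [Nat.factorial_succ]
    push_cast
    field_simp
    ring
  rw [← hasSum_nat_add_iff' 1]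
  simpa [← shift] using (hasSum_one_poissonMeasure r).mul_left (r : ℝ)

theorem lintegral_natCast_poissonMeasure (r : ℝ≥0) :
    ∫⁻ n, (n : ℝ≥0∞) ∂poissonMeasure r = r := by
  rw [poissonMeasure, lintegral_sum_measure]
  calc ∑' n : ℕ, ∫⁻ k : ℕ, (k : ℝ≥0∞) ∂(ENNReal.ofReal (Real.exp (-r) * r ^ n / n !) • .dirac n)
      = ENNReal.ofReal (∑' n : ℕ, n * (Real.exp (-r) * r ^ n / n !)) := by
        rw [ENNReal.ofReal_tsum_of_nonneg (fun n => by positivity)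
          (hasSum_mean_poissonMeasure r).summable]
        congr 1 with n
        rw [lintegral_smul_measure, lintegral_dirac, smul_eq_mul,
          ENNReal.ofReal_mul (by positivity), ENNReal.ofReal_natCast, mul_comm]
    _ = r := by rw [(hasSum_mean_poissonMeasure r).tsum_eq, ENNReal.ofReal_coe_nnreal]

@[fun_prop]
theorem measurable_sum_range {Ω M : Type*} [MeasurableSpace Ω] [AddCommMonoid M]
    [MeasurableSpace M] [MeasurableAdd₂ M] {f : ℕ → Ω → M} (hf : ∀ i, Measurable (f i))
    {N : Ω → ℕ} (hN : Measurable N) : Measurable fun ω => ∑ i ∈ range (N ω), f i ω :=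
  (measurable_from_prod_countable_left (f := fun p : Ω × ℕ => ∑ i ∈ range p.2, f i p.1)
    fun n => Finset.measurable_sum (range n) fun i _ => hf i).comp (measurable_id.prodMk hN)

section

variable {Ω : Type*} [MeasurableSpace Ω] {μ : Measure Ω}

theorem lintegral_sum_range_eq_lintegral_mul {N : Ω → ℕ} (hN : Measurable N)
    {D : ℕ → Ω → ℝ≥0∞} (hD : ∀ i, Measurable (D i)) (hindep : ∀ i, IndepFun N (D i) μ)
    {L : ℝ≥0∞} (hL : ∀ i, ∫⁻ ω, D i ω ∂μ = L) :
    ∫⁻ ω, ∑ i ∈ range (N ω), D i ω ∂μ = (∫⁻ ω, (N ω : ℝ≥0∞) ∂μ) * L := by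
  set ind : ℕ → ℕ → ℝ≥0∞ := fun i n => if i < n then 1 else 0
  have hind : ∀ i, Measurable fun ω => ind i (N ω) := fun i =>
    (measurable_of_countable (ind i)).comp hN
  calc ∫⁻ ω, ∑ i ∈ range (N ω), D i ω ∂μ = ∫⁻ ω, ∑' i, ind i (N ω) * D i ω ∂μ := by
        simp only [ind, ite_mul, one_mul, zero_mul, tsum_ite_lt_eq_sum_range]
    _ = ∑' i, (∫⁻ ω, ind i (N ω) ∂μ) * L := by
        rw [lintegral_tsum fun i => by exact ((hind i).mul (hD i)).aemeasurable]
        congr 1 with i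
        rw [← hL i]
        exact lintegral_mul_eq_lintegral_mul_lintegral_of_indepFun (hind i) (hD i)
          ((hindep i).comp (measurable_of_countable (ind i)) measurable_id)
    _ = (∫⁻ ω, (N ω : ℝ≥0∞) ∂μ) * L := by
        rw [ENNReal.tsum_mul_right, ← lintegral_tsum fun i => (hind i).aemeasurable]
        simp [ind, tsum_ite_lt_eq_sum_range]

theorem lintegral_sum_range_eq_mul_of_map_eq_poissonMeasure {N : Ω → ℕ} (hN : Measurable N)
    {r : ℝ≥0} (hpois : μ.map N = poissonMeasure r) {D : ℕ → Ω → ℝ≥0∞}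
    (hD : ∀ i, Measurable (D i)) (hindep : ∀ i, IndepFun N (D i) μ) {L : ℝ≥0∞}
    (hL : ∀ i, ∫⁻ ω, D i ω ∂μ = L) :
    ∫⁻ ω, ∑ i ∈ range (N ω), D i ω ∂μ = r * L := by
  rw [lintegral_sum_range_eq_lintegral_mul hN hD hindep hL, ← lintegral_map (by fun_prop) hN,
    hpois, lintegral_natCast_poissonMeasure]

theorem lintegral_abs_div_add_sum_sub_le {a : ℝ} (ha : 0 < a) {p : ℕ → Ω → ℝ × ℝ}
    (hp : ∀ i, Measurable (p i)) (hnonneg : ∀ i, ∀ᵐ ω ∂μ, 0 ≤ (p i ω).1 ∧ 0 ≤ (p i ω).2)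
    {N : Ω → ℕ} (hN : Measurable N) :
    ∫⁻ ω, ENNReal.ofReal |a / (a + ∑ i ∈ range (N ω), (p i ω).2)
        - a / (a + ∑ i ∈ range (N ω), (p i ω).1)| ∂μ
      ≤ ENNReal.ofReal a⁻¹ *
        ∫⁻ ω, ∑ i ∈ range (N ω), ENNReal.ofReal |(p i ω).1 - (p i ω).2| ∂μ := by
  rw [← lintegral_const_mul _ (measurable_sum_range (fun i => by fun_prop) hN)]
  refine lintegral_mono_ae ?_
  filter_upwards [ae_all_iff.2 hnonneg] with ω hω
  rw [← ENNReal.ofReal_sum_of_nonneg fun i _ => abs_nonneg _,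
    ← ENNReal.ofReal_mul (inv_nonneg.2 ha.le)]
  exact ENNReal.ofReal_le_ofReal
    (abs_div_add_sum_sub_div_add_sum_le _ ha (fun i => (hω i).2) fun i => (hω i).1)

theorem lintegral_ofReal_abs_sub_ne_top [IsFiniteMeasure μ] {f g : Ω → ℝ}
    (hf : Measurable f) (hg : Measurable g)
    (hfg : ∀ᵐ ω ∂μ, f ω ∈ Set.Icc (0 : ℝ) 1 ∧ g ω ∈ Set.Icc (0 : ℝ) 1) :
    ∫⁻ ω, ENNReal.ofReal |f ω - g ω| ∂μ ≠ ⊤ := by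
  refine (Integrable.of_bound (hf.sub hg).abs.aestronglyMeasurable 1 ?_).lintegral_lt_top.ne
  filter_upwards [hfg] with ω ⟨⟨hf0, hf1⟩, ⟨hg0, hg1⟩⟩
  rw [Real.norm_eq_abs, abs_abs, Pi.sub_apply, abs_sub_le_iff]
  constructor <;> linarith

end

theorem fixed_point_contraction_general {Ω : Type*} [MeasurableSpace Ω] (μ : Measure Ω)
    [IsProbabilityMeasure μ] (c x : ℝ) (hx : Real.sqrt c < x)
    (Me Mo : Ω → ℝ) (hMe : Measurable Me) (hMo : Measurable Mo)
    (hrange : ∀ᵐ ω ∂μ, Me ω ∈ Set.Icc (0:ℝ) 1 ∧ Mo ω ∈ Set.Icc (0:ℝ) 1)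
    (pairs : ℕ → Ω → ℝ × ℝ) (hpairsm : ∀ i, Measurable (pairs i))
    (hpairsrange : ∀ i, ∀ᵐ ω ∂μ, (pairs i ω).1 ∈ Set.Icc (0:ℝ) 1 ∧
      (pairs i ω).2 ∈ Set.Icc (0:ℝ) 1)
    (hcopies : ∀ i, μ.map (pairs i) = μ.map (fun ω => (Me ω, Mo ω)))
    (Δ : Ω → ℕ) (hΔm : Measurable Δ)
    (hpois : μ.map Δ = poissonMeasure (Real.toNNReal c))
    (hΔindep : IndepFun Δ (fun ω => (fun i => pairs i ω)) μ)
    (hfix : μ.map (fun ω => (Me ω, Mo ω))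
      = μ.map (fun ω =>
          (x ^ 2 / (x ^ 2 + ∑ i ∈ Finset.range (Δ ω), (pairs i ω).2),
           x ^ 2 / (x ^ 2 + ∑ i ∈ Finset.range (Δ ω), (pairs i ω).1)))) :
    (∫ ω, |Me ω - Mo ω| ∂μ ≤ c ^ 2 / x ^ 4 * ∫ ω, |Me ω - Mo ω| ∂μ) ∧
      ∀ᵐ ω ∂μ, Me ω = Mo ω := by
  have hx2 : 0 < x ^ 2 := pow_pos ((Real.sqrt_nonneg c).trans_lt hx) 2
  have hk : ENNReal.ofReal (x ^ 2)⁻¹ * c.toNNReal < 1 := by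
    rw [← ENNReal.ofReal_coe_nnreal, ← ENNReal.ofReal_mul (by positivity), ENNReal.ofReal_lt_one,
      inv_mul_lt_iff₀ hx2, mul_one, Real.coe_toNNReal']
    exact max_lt (Real.lt_sq_of_sqrt_lt hx) hx2
  have habs : Measurable fun p : ℝ × ℝ => ENNReal.ofReal |p.1 - p.2| := by fun_prop
  have hcopy_lintegral (i : ℕ) := ((IdentDistrib.mk (hpairsm i).aemeasurable
    (hMe.prodMk hMo).aemeasurable (hcopies i)).comp habs).lintegral_eq
  have hwald := lintegral_sum_range_eq_mul_of_map_eq_poissonMeasure hΔm hpois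
    (fun i => habs.comp (hpairsm i))
    (fun i => hΔindep.comp measurable_id (habs.comp (measurable_pi_apply i))) hcopy_lintegral
  have hfix_lintegral := ((IdentDistrib.mk (hMe.prodMk hMo).aemeasurable
    (by fun_prop) hfix).comp habs).lintegral_eq
  have hcontr : ∫⁻ ω, ENNReal.ofReal |Me ω - Mo ω| ∂μ
      ≤ ENNReal.ofReal (x ^ 2)⁻¹ * c.toNNReal * ∫⁻ ω, ENNReal.ofReal |Me ω - Mo ω| ∂μ := by
    have hbound := lintegral_abs_div_add_sum_sub_le hx2 hpairsm
      (fun i => (hpairsrange i).mono fun ω h => ⟨h.1.1, h.2.1⟩) hΔm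
    simp only [Function.comp_def] at hwald hfix_lintegral
    rwa [← hfix_lintegral, hwald, ← mul_assoc] at hbound
  have hae : ∀ᵐ ω ∂μ, Me ω = Mo ω := by
    filter_upwards [(lintegral_eq_zero_iff (by fun_prop)).1 (ENNReal.eq_zero_of_le_mul_of_lt_one
      (lintegral_ofReal_abs_sub_ne_top hMe hMo hrange) hk hcontr)] with ω hω
    simpa [sub_eq_zero] using hω
  refine ⟨?_, hae⟩
  rw [integral_eq_zero_of_ae (by filter_upwards [hae] with ω h; simp [h]), mul_zero]

/-- contraction estimate for the distributional fixed point equation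
on the Poisson(c) Galton–Watson tree, for monomer activity `x > √c`:
`E|M_even − M_odd| ≤ (c²/x⁴) E|M_even − M_odd|`, hence `M_even = M_odd` a.s. -/
theorem fixed_point_contraction {Ω : Type*} [MeasurableSpace Ω] (μ : Measure Ω)
    [IsProbabilityMeasure μ] (c x : ℝ) (hc : 0 < c) (hx : Real.sqrt c < x)
    (Me Mo : Ω → ℝ) (hMe : Measurable Me) (hMo : Measurable Mo)
    (hrange : ∀ᵐ ω ∂μ, Me ω ∈ Set.Icc (0:ℝ) 1 ∧ Mo ω ∈ Set.Icc (0:ℝ) 1)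
    (pairs : ℕ → Ω → ℝ × ℝ) (hpairsm : ∀ i, Measurable (pairs i))
    (hpairsrange : ∀ i, ∀ᵐ ω ∂μ, (pairs i ω).1 ∈ Set.Icc (0:ℝ) 1 ∧
      (pairs i ω).2 ∈ Set.Icc (0:ℝ) 1)
    (hindep : iIndepFun pairs μ)
    (hcopies : ∀ i, μ.map (pairs i) = μ.map (fun ω => (Me ω, Mo ω)))
    (Δ : Ω → ℕ) (hΔm : Measurable Δ)
    (hpois : μ.map Δ = poissonMeasure (Real.toNNReal c))
    (hΔindep : IndepFun Δ (fun ω => (fun i => pairs i ω)) μ)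
    (hfix : μ.map (fun ω => (Me ω, Mo ω))
      = μ.map (fun ω =>
          (x ^ 2 / (x ^ 2 + ∑ i ∈ Finset.range (Δ ω), (pairs i ω).2),
           x ^ 2 / (x ^ 2 + ∑ i ∈ Finset.range (Δ ω), (pairs i ω).1)))) :
    (∫ ω, |Me ω - Mo ω| ∂μ ≤ c ^ 2 / x ^ 4 * ∫ ω, |Me ω - Mo ω| ∂μ) ∧
      ∀ᵐ ω ∂μ, Me ω = Mo ω :=
  fixed_point_contraction_general μ c x hx Me Mo hMe hMo hrange pairs hpairsm hpairsrange hcopies Δ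
    hΔm hpois hΔindep hfix
end

section
/- Mean-field pure monomer-dimer partition function as a one-dimensional Gaussian integral: on the complete graph with N vertices, uniform dimer activity w/N and monomer activities x_i > 0, the partition function satisfies Z_N = √(N/(2πw)) ∫_ℝ exp(−N ξ²/(2w)) Π_{i=1}^N (ξ + x_i) dξ. -/
open scoped BigOperators
open MeasureTheory Filter Finset

attribute [local instance] Classical.propDecidable

noncomputable section

variable {V : Type*} [Fintype V] [DecidableEq V]

/-!
Expanding `∏ i, (ξ + x i)` over subsets, the coefficient of `∏ i ∉ T, x i` on the right is the
`|T|`-th moment of a centred Gaussian of variance `c = w / N`, and on the left it is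
`c ^ (|T| / 2)` times the number of perfect matchings of `T`. Both sequences `m k` satisfy
`m 0 = 1`, `m 1 = 0` and `m (k + 2) = c (k + 1) m k`: for the Gaussian by integration by parts,
for the matchings by choosing the partner of a fixed vertex.
-/

/-- The moments of a centred Gaussian of variance `c`. -/
def wickMoment (c : ℝ) : ℕ → ℝ
  | 0 => 1
  | 1 => 0
  | k + 2 => c * (k + 1) * wickMoment c k

section GaussianMoments

open Real

lemma integrable_pow_mul_exp_neg_mul_sq {b : ℝ} (hb : 0 < b) (k : ℕ) :
    Integrable fun x : ℝ => x ^ k * exp (-b * x ^ 2) := by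
  simpa [rpow_natCast] using
    integrable_rpow_mul_exp_neg_mul_sq hb (s := k) (by linarith [(k.cast_nonneg : (0 : ℝ) ≤ k)])

lemma integral_mul_exp_neg_mul_sq (b : ℝ) : ∫ x : ℝ, x * exp (-b * x ^ 2) = 0 := by
  have h := integral_neg_eq_self (fun x : ℝ => x * exp (-b * x ^ 2)) volume
  simp only [neg_sq, neg_mul, integral_neg] at h
  simp only [neg_mul]
  linarith

lemma integral_pow_add_two_mul_exp_neg_mul_sq {b : ℝ} (hb : 0 < b) (k : ℕ) :
    ∫ x : ℝ, x ^ (k + 2) * exp (-b * x ^ 2)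
      = (k + 1) / (2 * b) * ∫ x : ℝ, x ^ k * exp (-b * x ^ 2) := by
  have hu (x : ℝ) : HasDerivAt (fun y : ℝ => y ^ (k + 1)) ((k + 1) * x ^ k) x := by
    simpa using hasDerivAt_pow (k + 1) x
  have hv (x : ℝ) : HasDerivAt (fun y : ℝ => -(2 * b)⁻¹ * exp (-b * y ^ 2))
      (x * exp (-b * x ^ 2)) x := by
    refine ((((hasDerivAt_pow 2 x).const_mul (-b)).exp).const_mul (-(2 * b)⁻¹)).congr_deriv ?_
    field_simp
    ring
  have hint (n : ℕ) (a : ℝ) : Integrable fun x : ℝ => a * (x ^ n * exp (-b * x ^ 2)) :=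
    (integrable_pow_mul_exp_neg_mul_sq hb n).const_mul a
  have parts := integral_mul_deriv_eq_deriv_mul_of_integrable (fun x _ => hu x) (fun x _ => hv x)
    (by convert hint (k + 2) 1 using 2; simp only [Pi.mul_apply]; ring)
    (by convert hint k (-(k + 1) / (2 * b)) using 2; simp only [Pi.mul_apply]; ring)
    (by convert hint (k + 1) (-(2 * b)⁻¹) using 2; simp only [Pi.mul_apply]; ring)
  calc ∫ x : ℝ, x ^ (k + 2) * exp (-b * x ^ 2)
      = ∫ x : ℝ, x ^ (k + 1) * (x * exp (-b * x ^ 2)) := by congr 1; ext x; ring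
    _ = -∫ x : ℝ, (k + 1) * x ^ k * (-(2 * b)⁻¹ * exp (-b * x ^ 2)) := parts
    _ = (k + 1) / (2 * b) * ∫ x : ℝ, x ^ k * exp (-b * x ^ 2) := by
      rw [← integral_const_mul, ← integral_neg]; congr 1; ext x; ring

lemma sqrt_mul_integral_pow_mul_exp_neg_mul_sq {b : ℝ} (hb : 0 < b) (k : ℕ) :
    √(b / π) * ∫ x : ℝ, x ^ k * exp (-b * x ^ 2) = wickMoment (2 * b)⁻¹ k := by
  induction k using Nat.twoStepInduction with
  | zero =>
    simp only [pow_zero, one_mul, integral_gaussian, wickMoment]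
    rw [← sqrt_mul (by positivity), show b / π * (π / b) = 1 by field_simp, sqrt_one]
  | one => simp only [pow_one, integral_mul_exp_neg_mul_sq, mul_zero, wickMoment]
  | more k ih _ =>
    rw [integral_pow_add_two_mul_exp_neg_mul_sq hb, wickMoment, ← ih]
    ring

end GaussianMoments

section PerfectMatchings

variable {α : Type*}

structure IsPerfectMatchingOn (T : Finset α) (D : Finset (Sym2 α)) : Prop where
  not_isDiag : ∀ e ∈ D, ¬ e.IsDiag
  disjoint : ∀ e ∈ D, ∀ f ∈ D, e ≠ f → ∀ v : α, ¬(v ∈ e ∧ v ∈ f)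
  mem_iff : ∀ a, a ∈ T ↔ ∃ e ∈ D, a ∈ e

namespace IsPerfectMatchingOn

variable {T : Finset α} {D : Finset (Sym2 α)} {u v : α}

lemma notMem_of_notMem (hD : IsPerfectMatchingOn T D) {a : α} (ha : a ∉ T) {e : Sym2 α}
    (he : e ∈ D) : a ∉ e :=
  fun hae => ha ((hD.mem_iff a).2 ⟨e, he, hae⟩)

lemma subset_sym2 (hD : IsPerfectMatchingOn T D) : D ⊆ T.sym2 := fun e he =>
  mem_sym2_iff.2 fun a hae => (hD.mem_iff a).2 ⟨e, he, hae⟩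

lemma exists_edge [DecidableEq α] (hD : IsPerfectMatchingOn T D) (hv : v ∈ T) :
    ∃ u ∈ T.erase v, s(v, u) ∈ D := by
  obtain ⟨e, he, hve⟩ := (hD.mem_iff v).1 hv
  rw [← Sym2.other_spec hve] at he
  refine ⟨_, mem_erase.2 ⟨fun h => hD.not_isDiag _ he (Sym2.mk_isDiag_iff.2 h.symm), ?_⟩, he⟩
  exact (hD.mem_iff _).2 ⟨_, he, Sym2.mem_mk_right _ _⟩

lemma insert_edge [DecidableEq α] (hD : IsPerfectMatchingOn ((T.erase v).erase u) D) (hv : v ∈ T)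
    (hu : u ∈ T.erase v) : IsPerfectMatchingOn T (insert s(v, u) D) := by
  have hvD : ∀ e ∈ D, v ∉ e := fun e => hD.notMem_of_notMem (by simp)
  have huD : ∀ e ∈ D, u ∉ e := fun e => hD.notMem_of_notMem (by simp)
  refine ⟨?_, ?_, fun a => ?_⟩
  · simpa [Sym2.mk_isDiag_iff, eq_comm] using ⟨(mem_erase.1 hu).1, hD.not_isDiag⟩
  · simp only [mem_insert]
    rintro e (rfl | he) f (rfl | hf) hef a ⟨hae, haf⟩
    · exact hef rfl
    · rcases Sym2.mem_iff.1 hae with rfl | rfl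
      exacts [hvD f hf haf, huD f hf haf]
    · rcases Sym2.mem_iff.1 haf with rfl | rfl
      exacts [hvD e he hae, huD e he hae]
    · exact hD.disjoint e he f hf hef a ⟨hae, haf⟩
  · by_cases hav : a = v
    · subst hav; simpa using hv
    by_cases hau : a = u
    · subst hau; simpa using mem_of_mem_erase hu
    simpa [hav, hau] using hD.mem_iff a

lemma erase_edge [DecidableEq α] (hD : IsPerfectMatchingOn T D) (he : s(v, u) ∈ D) :
    IsPerfectMatchingOn ((T.erase v).erase u) (D.erase s(v, u)) := by
  refine ⟨fun f hf => hD.not_isDiag f (mem_of_mem_erase hf),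
    fun f hf g hg => hD.disjoint f (mem_of_mem_erase hf) g (mem_of_mem_erase hg), fun a => ?_⟩
  simp only [mem_erase]
  constructor
  · rintro ⟨hau, hav, haT⟩
    obtain ⟨f, hf, haf⟩ := (hD.mem_iff a).1 haT
    refine ⟨f, ⟨?_, hf⟩, haf⟩
    rintro rfl
    rcases Sym2.mem_iff.1 haf with rfl | rfl
    exacts [hav rfl, hau rfl]
  · rintro ⟨f, ⟨hfe, hf⟩, haf⟩
    have hae (ha : a ∈ s(v, u)) : False := hD.disjoint f hf _ he hfe a ⟨haf, ha⟩
    exact ⟨fun h => hae (h ▸ Sym2.mem_mk_right _ _), fun h => hae (h ▸ Sym2.mem_mk_left _ _),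
      (hD.mem_iff a).2 ⟨f, hf, haf⟩⟩

end IsPerfectMatchingOn

def perfectMatchingsOn (T : Finset α) : Finset (Finset (Sym2 α)) :=
  T.sym2.powerset.filter (IsPerfectMatchingOn T)

lemma mem_perfectMatchingsOn {T : Finset α} {D : Finset (Sym2 α)} :
    D ∈ perfectMatchingsOn T ↔ IsPerfectMatchingOn T D := by
  simpa [perfectMatchingsOn] using IsPerfectMatchingOn.subset_sym2

lemma perfectMatchingsOn_empty : perfectMatchingsOn (∅ : Finset α) = {∅} := by
  ext D
  rw [mem_perfectMatchingsOn, mem_singleton]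
  refine ⟨fun hD => subset_empty.1 (by simpa using hD.subset_sym2), ?_⟩
  rintro rfl
  exact ⟨by simp, by simp, by simp⟩

lemma sum_perfectMatchingsOn_of_mem [DecidableEq α] {M : Type*} [AddCommMonoid M]
    (f : Finset (Sym2 α) → M) {T : Finset α} {v : α} (hv : v ∈ T) :
    ∑ D ∈ perfectMatchingsOn T, f D
      = ∑ u ∈ T.erase v, ∑ D ∈ perfectMatchingsOn ((T.erase v).erase u), f (insert s(v, u) D) := by
  rw [sum_sigma']
  symm
  refine sum_bij (fun p _ => insert s(v, p.1) p.2) ?_ ?_ ?_ (fun _ _ => rfl)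
  · simp only [mem_sigma, mem_perfectMatchingsOn]
    exact fun p hp => hp.2.insert_edge hv hp.1
  · simp only [mem_sigma, mem_perfectMatchingsOn]
    rintro ⟨u, D⟩ ⟨_, hD⟩ ⟨u', D'⟩ ⟨_, hD'⟩ heq
    have hvD : s(v, u) ∉ D := fun h => hD.notMem_of_notMem (by simp) h (Sym2.mem_mk_left _ _)
    have hvD' : s(v, u') ∉ D' := fun h => hD'.notMem_of_notMem (by simp) h (Sym2.mem_mk_left _ _)
    obtain rfl : u = u' := by
      have : s(v, u) ∈ insert s(v, u') D' := heq ▸ mem_insert_self _ _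
      rcases mem_insert.1 this with h | h
      · exact Sym2.congr_right.1 h
      · exact absurd (Sym2.mem_mk_left _ _) (hD'.notMem_of_notMem (by simp) h)
    simpa [erase_insert hvD, erase_insert hvD'] using congrArg (·.erase s(v, u)) heq
  · intro D hD
    rw [mem_perfectMatchingsOn] at hD
    obtain ⟨u, hu, he⟩ := hD.exists_edge hv
    exact ⟨⟨u, D.erase s(v, u)⟩, mem_sigma.2 ⟨hu, mem_perfectMatchingsOn.2 (hD.erase_edge he)⟩,
      insert_erase he⟩

lemma sum_pow_card_perfectMatchingsOn [DecidableEq α] (c : ℝ) (T : Finset α) :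
    ∑ D ∈ perfectMatchingsOn T, c ^ D.card = wickMoment c T.card := by
  induction hn : T.card using Nat.twoStepInduction generalizing T with
  | zero => simp [card_eq_zero.1 hn, perfectMatchingsOn_empty, wickMoment]
  | one =>
    obtain ⟨v, rfl⟩ := card_eq_one.1 hn
    simp [sum_perfectMatchingsOn_of_mem _ (mem_singleton_self v), wickMoment]
  | more k ih _ =>
    obtain ⟨v, hv⟩ := card_pos.1 (by omega : 0 < T.card)
    have hinner (u : α) (hu : u ∈ T.erase v) :
        ∑ D ∈ perfectMatchingsOn ((T.erase v).erase u), c ^ (insert s(v, u) D).card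
          = c * wickMoment c k := by
      rw [← ih _ (by rw [card_erase_of_mem hu, card_erase_of_mem hv]; omega), mul_sum]
      refine sum_congr rfl fun D hD => ?_
      have hvD : s(v, u) ∉ D := fun h =>
        (mem_perfectMatchingsOn.1 hD).notMem_of_notMem (by simp) h (Sym2.mem_mk_left _ _)
      rw [card_insert_of_notMem hvD, pow_succ']
    rw [sum_perfectMatchingsOn_of_mem _ hv, sum_congr rfl hinner, sum_const, card_erase_of_mem hv,
      hn, wickMoment, nsmul_eq_mul]
    push_cast
    ring

end PerfectMatchings

lemma mem_univ_sdiff_uncovered {D : Finset (Sym2 V)} {a : V} :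
    a ∈ univ \ uncovered D ↔ ∃ e ∈ D, a ∈ e := by
  simp [uncovered]

lemma filter_matchingsIn_completeEdges (T : Finset V) :
    {D ∈ matchingsIn (completeEdges V) | univ \ uncovered D = T} = perfectMatchingsOn T := by
  ext D
  have hsub (hD : ∀ e ∈ D, ¬ e.IsDiag) : D ⊆ completeEdges V := fun e he =>
    mem_filter.2 ⟨mem_univ e, hD e he⟩
  rw [mem_filter, matchingsIn, mem_filter, mem_powerset, IsMatchingIn, mem_perfectMatchingsOn,
    Finset.ext_iff]
  simp only [mem_univ_sdiff_uncovered]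
  exact ⟨fun ⟨⟨_, _, hd, hdisj⟩, hT⟩ => ⟨hd, hdisj, fun a => (hT a).symm⟩,
    fun ⟨hd, hdisj, hT⟩ => ⟨⟨hsub hd, hsub hd, hd, hdisj⟩, fun a => (hT a).symm⟩⟩

lemma partFun_completeEdges_const (c : ℝ) (x : V → ℝ) :
    partFun (completeEdges V) (fun _ => c) x
      = ∑ T ∈ univ.powerset, wickMoment c T.card * ∏ i ∈ univ \ T, x i := by
  rw [partFun, ← sum_fiberwise_of_maps_to (g := fun D => univ \ uncovered D)
    (fun _ _ => mem_powerset.2 (subset_univ _))]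
  refine sum_congr rfl fun T _ => ?_
  rw [← sum_pow_card_perfectMatchingsOn, ← filter_matchingsIn_completeEdges, sum_mul]
  refine sum_congr rfl fun D hD => ?_
  rw [prod_const, ← (mem_filter.1 hD).2, Finset.sdiff_sdiff_eq_self (subset_univ _)]

open Real in
lemma sqrt_mul_integral_exp_neg_mul_sq_mul_prod_add {α : Type*} [DecidableEq α] {b : ℝ}
    (hb : 0 < b) (s : Finset α) (x : α → ℝ) :
    √(b / π) * ∫ ξ : ℝ, exp (-b * ξ ^ 2) * ∏ i ∈ s, (ξ + x i)
      = ∑ T ∈ s.powerset, wickMoment (2 * b)⁻¹ T.card * ∏ i ∈ s \ T, x i := by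
  have hexpand (ξ : ℝ) : exp (-b * ξ ^ 2) * ∏ i ∈ s, (ξ + x i)
      = ∑ T ∈ s.powerset, (∏ i ∈ s \ T, x i) * (ξ ^ T.card * exp (-b * ξ ^ 2)) := by
    rw [prod_add, mul_sum]
    refine sum_congr rfl fun T _ => ?_
    rw [prod_const]
    ring
  simp_rw [hexpand]
  rw [integral_finsetSum _ fun T _ => (integrable_pow_mul_exp_neg_mul_sq hb _).const_mul _, mul_sum]
  refine sum_congr rfl fun T _ => ?_
  rw [integral_const_mul, ← sqrt_mul_integral_pow_mul_exp_neg_mul_sq hb]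
  ring

theorem mean_field_gaussian_integral_representation_general (N : ℕ) (hN : 0 < N)
    (w : ℝ) (hw : 0 < w) (x : Fin N → ℝ) :
    partFun (completeEdges (Fin N)) (fun _ => w / N) x
      = Real.sqrt (N / (2 * Real.pi * w)) *
          ∫ ξ : ℝ, Real.exp (-(N * ξ ^ 2) / (2 * w)) * ∏ i, (ξ + x i) := by
  set b : ℝ := N / (2 * w)
  have hb : 0 < b := by positivity
  have hvar : w / N = (2 * b)⁻¹ := by simp only [b]; field_simp
  have hsqrt : N / (2 * Real.pi * w) = b / Real.pi := by ring
  have hexp (ξ : ℝ) : Real.exp (-(N * ξ ^ 2) / (2 * w)) = Real.exp (-b * ξ ^ 2) := by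
    congr 1; ring
  simp_rw [partFun_completeEdges_const, hvar, hsqrt, hexp,
    sqrt_mul_integral_exp_neg_mul_sq_mul_prod_add hb]

/-- on the complete graph with `N` vertices, uniform dimer activity
`w/N` and monomer activities `x_i > 0`,
`Z_N = √(N/(2πw)) ∫ exp(−Nξ²/(2w)) Π_i (ξ + x_i) dξ`. -/
theorem mean_field_gaussian_integral_representation (N : ℕ) (hN : 0 < N)
    (w : ℝ) (hw : 0 < w) (x : Fin N → ℝ) (hx : ∀ i, 0 < x i) :
    partFun (completeEdges (Fin N)) (fun _ => w / N) x
      = Real.sqrt (N / (2 * Real.pi * w)) *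
          ∫ ξ : ℝ, Real.exp (-(N * ξ ^ 2) / (2 * w)) * ∏ i, (ξ + x i) :=
  mean_field_gaussian_integral_representation_general N hN w hw x
end
end

section
/- Gaussian convolution identity: let h ∈ ℝ, J > 0, and let M_N be the number of monomers under the mean-field imitative Gibbs measure μ_N on K_N (Hamiltonian −h Σα_i − (J/N) Σ_{i<j}[α_iα_j + (1−α_i)(1−α_j)], dimer weight 1/N). Let W ~ N(0, (2J)^{-1}) be independent of M_N. Then for any η ≥ 0 and u ∈ ℝ, the law of W/N^{1/2−η} + (M_N − Nu)/N^{1−η} has density proportional to exp(N·p̃_N(x/N^η + u)) with respect to Lebesgue measure, where p̃_N(x) = −Jx² + J/2 + p⁰_N(2Jx + h − J) and p⁰_N(t) = (1/N) log Z⁰_N(t) is the pressure of the pure model with monomer field t. -/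
open scoped BigOperators
open MeasureTheory Filter Finset

attribute [local instance] Classical.propDecidable

noncomputable section

variable {V : Type*} [Fintype V] [DecidableEq V]

open ProbabilityTheory

/-- Gibbs weight of a matching `D` of the complete graph on `N` vertices for the
mean-field imitative model: `N^{-|D|} exp(h M + (J/N)(C(M,2) + C(N−M,2)))`
where `M = N − 2|D|` is the number of monomers. -/
def gibbsWeight (N : ℕ) (h J : ℝ) (D : Finset (Sym2 (Fin N))) : ℝ :=
  ((1 : ℝ) / N) ^ D.card *
    Real.exp (h * ((N : ℝ) - 2 * D.card) +
      J / N * ((((N : ℝ) - 2 * D.card) * (((N : ℝ) - 2 * D.card) - 1) +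
        (2 * (D.card : ℝ)) * (2 * (D.card : ℝ) - 1)) / 2))

/-- The partition function of the mean-field imitative monomer-dimer model. -/
def gibbsZ (N : ℕ) (h J : ℝ) : ℝ :=
  ∑ D ∈ matchingsIn (completeEdges (Fin N)), gibbsWeight N h J D

/-- The law of the number of monomers `M_N` under the Gibbs measure. -/
def monomerLaw (N : ℕ) (h J : ℝ) : Measure ℝ :=
  (ENNReal.ofReal (gibbsZ N h J))⁻¹ •
    ∑ D ∈ matchingsIn (completeEdges (Fin N)),
      ENNReal.ofReal (gibbsWeight N h J D) • Measure.dirac ((N : ℝ) - 2 * D.card)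

/-- The pure (`J = 0`) mean-field partition function with monomer field `t`. -/
def Z0N (N : ℕ) (t : ℝ) : ℝ :=
  ∑ D ∈ matchingsIn (completeEdges (Fin N)),
    ((1 : ℝ) / N) ^ D.card * Real.exp (t * ((N : ℝ) - 2 * D.card))

/-- The pure pressure density `p⁰_N(t) = (1/N) log Z⁰_N(t)`. -/
def p0N (N : ℕ) (t : ℝ) : ℝ := (1 / (N : ℝ)) * Real.log (Z0N N t)

/-- `p̃_N(x) = −Jx² + J/2 + p⁰_N(2Jx + h − J)`. -/
def ptildeN (N : ℕ) (h J x : ℝ) : ℝ :=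
  -J * x ^ 2 + J / 2 + p0N N (2 * J * x + h - J)

/-!
Dividing `W` by `N^{1/2-η}` gives a centred Gaussian of variance `N^{2η}/(2JN)`, independent of the
rescaled monomer number, so the law of the sum is the Gaussian convolved with a finite sum of Dirac
masses, i.e. a mixture of Gaussian densities indexed by the matchings `D`. For `m = N - 2|D|` and
`y = x/N^η + u`, completing the square in the exponent of each term makes the quadratic part
`J m²/N` of the imitation energy cancel against that of the Gaussian, leaving
`exp(-J/2) exp(N(-Jy² + J/2)) N^{-|D|} exp((2Jy + h - J) m)`. Summing over `D` produces
`Z⁰_N(2Jy + h - J)`, that is `exp(N p̃_N(y))` up to a constant factor.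
-/

open scoped ENNReal NNReal

theorem MeasureTheory.withDensity_finsetSum {α ι : Type*} [MeasurableSpace α] (μ : Measure α)
    (s : Finset ι) {f : ι → α → ℝ≥0∞} (hf : ∀ i ∈ s, Measurable (f i)) :
    μ.withDensity (fun a => ∑ i ∈ s, f i a) = ∑ i ∈ s, μ.withDensity (f i) := by
  ext1 t ht
  rw [Measure.finsetSum_apply, withDensity_apply _ ht, lintegral_finsetSum _ hf]
  exact Finset.sum_congr rfl fun i _ => (withDensity_apply _ ht).symm

theorem MeasureTheory.Measure.map_sum_smul_dirac {α β ι : Type*} [MeasurableSpace α]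
    [MeasurableSpace β] {f : α → β} (hf : Measurable f) (s : Finset ι) (c : ι → ℝ≥0∞)
    (a : ι → α) :
    (∑ i ∈ s, c i • Measure.dirac (a i)).map f = ∑ i ∈ s, c i • Measure.dirac (f (a i)) := by
  rw [Measure.map_finset_sum hf.aemeasurable]
  exact Finset.sum_congr rfl fun i _ => by rw [Measure.map_smul, Measure.map_dirac' hf]

theorem MeasureTheory.Measure.conv_finsetSum {M ι : Type*} [AddMonoid M] [MeasurableSpace M]
    [MeasurableAdd₂ M] (μ : Measure M) [SFinite μ] (s : Finset ι) (ν : ι → Measure M)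
    [∀ i, SFinite (ν i)] : μ ∗ ∑ i ∈ s, ν i = ∑ i ∈ s, μ ∗ ν i := by
  classical
  induction s using Finset.induction_on with
  | empty => simp
  | insert a s ha ih =>
    have : SFinite (∑ i ∈ s, ν i) := by rw [← Measure.sum_coe_finset]; infer_instance
    rw [Finset.sum_insert ha, Finset.sum_insert ha, Measure.conv_add, ih]

namespace ProbabilityTheory

theorem gaussianReal_conv_dirac (m x : ℝ) (v : ℝ≥0) :
    gaussianReal m v ∗ Measure.dirac x = gaussianReal (m + x) v := by
  rw [Measure.conv_dirac, gaussianReal_map_add_const]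

theorem gaussianReal_conv_sum_smul_dirac {ι : Type*} {v : ℝ≥0} (hv : v ≠ 0) (s : Finset ι)
    (r x : ι → ℝ) (hr : ∀ i ∈ s, 0 ≤ r i) :
    gaussianReal 0 v ∗ ∑ i ∈ s, ENNReal.ofReal (r i) • Measure.dirac (x i)
      = volume.withDensity
          (fun y => ENNReal.ofReal (∑ i ∈ s, r i * gaussianPDFReal (x i) v y)) := by
  have hdensity : ∀ y, ENNReal.ofReal (∑ i ∈ s, r i * gaussianPDFReal (x i) v y)
      = ∑ i ∈ s, (ENNReal.ofReal (r i) • gaussianPDF (x i) v) y := fun y => by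
    rw [ENNReal.ofReal_sum_of_nonneg fun i hi =>
      mul_nonneg (hr i hi) (gaussianPDFReal_nonneg _ _ _)]
    refine Finset.sum_congr rfl fun i hi => ?_
    rw [Pi.smul_apply, smul_eq_mul, gaussianPDF, ENNReal.ofReal_mul (hr i hi)]
  simp_rw [hdensity,
    withDensity_finsetSum _ _ fun i _ => (measurable_gaussianPDF _ _).const_smul _,
    withDensity_smul _ (measurable_gaussianPDF _ _), Measure.conv_finsetSum,
    Measure.conv_smul_right, gaussianReal_conv_dirac, zero_add, gaussianReal_of_var_ne_zero _ hv]

end ProbabilityTheory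

theorem empty_mem_matchingsIn (E : Finset (Sym2 V)) : ∅ ∈ matchingsIn E := by
  simp [matchingsIn, IsMatchingIn]

theorem gibbsWeight_nonneg (N : ℕ) (h J : ℝ) (D : Finset (Sym2 (Fin N))) :
    0 ≤ gibbsWeight N h J D := by
  unfold gibbsWeight; positivity

theorem gibbsZ_pos (N : ℕ) (h J : ℝ) : 0 < gibbsZ N h J :=
  Finset.sum_pos' (fun D _ => gibbsWeight_nonneg N h J D)
    ⟨∅, empty_mem_matchingsIn _, by simp only [gibbsWeight, card_empty]; positivity⟩

theorem Z0N_pos (N : ℕ) (t : ℝ) : 0 < Z0N N t :=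
  Finset.sum_pos' (fun D _ => by positivity)
    ⟨∅, empty_mem_matchingsIn _, by simp only [card_empty]; positivity⟩

theorem monomerLaw_eq_sum (N : ℕ) (h J : ℝ) :
    monomerLaw N h J = ∑ D ∈ matchingsIn (completeEdges (Fin N)),
      ENNReal.ofReal (gibbsWeight N h J D / gibbsZ N h J) •
        Measure.dirac ((N : ℝ) - 2 * D.card) := by
  rw [monomerLaw, Finset.smul_sum]
  refine Finset.sum_congr rfl fun D _ => ?_
  rw [smul_smul, ENNReal.ofReal_div_of_pos (gibbsZ_pos N h J), ENNReal.div_eq_inv_mul]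

theorem exp_mul_ptildeN {N : ℕ} (hN : N ≠ 0) (h J y : ℝ) :
    Real.exp (N * ptildeN N h J y)
      = Real.exp (N * (-J * y ^ 2 + J / 2)) * Z0N N (2 * J * y + h - J) := by
  rw [ptildeN, p0N, mul_add, ← mul_assoc, mul_one_div_cancel (Nat.cast_ne_zero.mpr hN), one_mul,
    Real.exp_add, Real.exp_log (Z0N_pos N _)]

theorem gibbs_exponent_add_gaussian_exponent {N J : ℝ} (hN : N ≠ 0) (hJ : J ≠ 0) {P B σ : ℝ}
    (hP : P ≠ 0) (hB : B * P = N) (hσ : σ * (2 * J * N) = P ^ 2) (h u x k : ℝ) :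
    h * (N - 2 * k) + J / N * (((N - 2 * k) * ((N - 2 * k) - 1) + 2 * k * (2 * k - 1)) / 2)
        + -(x - (N - 2 * k - N * u) / B) ^ 2 / (2 * σ)
      = -(J / 2) + N * (-J * (x / P + u) ^ 2 + J / 2)
        + (2 * J * (x / P + u) + h - J) * (N - 2 * k) := by
  have hB' : B = N / P := by rw [← hB]; field_simp
  have hσ' : σ = P ^ 2 / (2 * J * N) := by rw [← hσ]; field_simp
  subst hB' hσ'
  field_simp
  ring

section CompleteSquare

variable {N : ℕ} (hN : N ≠ 0) {J : ℝ} (hJ : J ≠ 0) {P B : ℝ} (hP : P ≠ 0) (hB : B * P = N)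
  {σ : ℝ≥0} (hσ : (σ : ℝ) * (2 * J * N) = P ^ 2) (h u x : ℝ)
include hN hJ hP hB hσ

theorem gibbsWeight_mul_gaussianPDFReal (D : Finset (Sym2 (Fin N))) :
    gibbsWeight N h J D * gaussianPDFReal ((N - 2 * D.card - N * u) / B) σ x
      = (√(2 * Real.pi * σ))⁻¹ * Real.exp (-(J / 2))
          * Real.exp (N * (-J * (x / P + u) ^ 2 + J / 2))
          * ((1 / N : ℝ) ^ D.card * Real.exp ((2 * J * (x / P + u) + h - J) * (N - 2 * D.card))) := by
  have hexp := gibbs_exponent_add_gaussian_exponent (Nat.cast_ne_zero.mpr hN) hJ hP hB hσ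
    h u x D.card
  rw [gibbsWeight, gaussianPDFReal]
  calc _ = (√(2 * Real.pi * σ))⁻¹ * (1 / N : ℝ) ^ D.card * Real.exp (h * (N - 2 * D.card)
        + J / N * (((N - 2 * D.card) * ((N - 2 * D.card) - 1) + 2 * D.card * (2 * D.card - 1)) / 2)
        + -(x - (N - 2 * D.card - N * u) / B) ^ 2 / (2 * σ)) := by
        simp only [Real.exp_add]; ring
    _ = _ := by rw [hexp, Real.exp_add, Real.exp_add]; ring

theorem sum_gibbsWeight_mul_gaussianPDFReal :
    ∑ D ∈ matchingsIn (completeEdges (Fin N)),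
        gibbsWeight N h J D * gaussianPDFReal ((N - 2 * D.card - N * u) / B) σ x
      = (√(2 * Real.pi * σ))⁻¹ * Real.exp (-(J / 2))
          * Real.exp (N * ptildeN N h J (x / P + u)) := by
  rw [Finset.sum_congr rfl fun D _ => gibbsWeight_mul_gaussianPDFReal hN hJ hP hB hσ h u x D,
    ← Finset.mul_sum, exp_mul_ptildeN hN, Z0N, mul_assoc]

end CompleteSquare

theorem exists_map_add_eq_withDensity_exp_ptildeN {Ω : Type*} [MeasurableSpace Ω]
    {μ : Measure Ω} [IsFiniteMeasure μ] {N : ℕ} (hN : N ≠ 0) {h J : ℝ} (hJ : J ≠ 0)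
    {P B u : ℝ} (hP : P ≠ 0) (hB : B * P = N) {σ : ℝ≥0} (hσ : (σ : ℝ) * (2 * J * N) = P ^ 2)
    {X M : Ω → ℝ} (hX : Measurable X) (hM : Measurable M) (hXM : IndepFun X M μ)
    (hlawX : μ.map X = gaussianReal 0 σ) (hlawM : μ.map M = monomerLaw N h J) :
    ∃ c : ℝ, 0 < c ∧ μ.map (fun ω => X ω + (M ω - N * u) / B)
      = volume.withDensity (fun x => ENNReal.ofReal
          (c * Real.exp (N * ptildeN N h J (x / P + u)))) := by
  have hσ0 : 0 < (σ : ℝ) := by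
    refine lt_of_le_of_ne σ.2 fun hσ0 => pow_ne_zero 2 hP ?_
    rw [← hσ, ← hσ0, zero_mul]
  have hscale : Measurable fun m : ℝ => (m - N * u) / B := by fun_prop
  have hlawM' : μ.map (fun ω => (M ω - N * u) / B)
      = ∑ D ∈ matchingsIn (completeEdges (Fin N)),
          ENNReal.ofReal (gibbsWeight N h J D / gibbsZ N h J)
            • Measure.dirac (((N : ℝ) - 2 * D.card - N * u) / B) := by
    rw [← Measure.map_sum_smul_dirac hscale, ← monomerLaw_eq_sum, ← hlawM]
    exact (Measure.map_map hscale hM).symm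
  have hconv : μ.map (fun ω => X ω + (M ω - N * u) / B)
      = μ.map X ∗ μ.map (fun ω => (M ω - N * u) / B) :=
    (hXM.comp measurable_id hscale).map_add_eq_map_conv_map hX (hscale.comp hM)
  refine ⟨(√(2 * Real.pi * σ))⁻¹ * Real.exp (-(J / 2)) / gibbsZ N h J,
    div_pos (mul_pos (inv_pos.mpr (Real.sqrt_pos.mpr (mul_pos Real.two_pi_pos hσ0)))
      (Real.exp_pos _)) (gibbsZ_pos N h J), ?_⟩
  rw [hconv, hlawX, hlawM', gaussianReal_conv_sum_smul_dirac (NNReal.coe_pos.mp hσ0).ne' _ _ _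
    fun D _ => div_nonneg (gibbsWeight_nonneg N h J D) (gibbsZ_pos N h J).le]
  congr with x
  simp_rw [div_mul_eq_mul_div, ← Finset.sum_div,
    sum_gibbsWeight_mul_gaussianPDFReal hN hJ hP hB hσ]

theorem gaussian_convolution_identity_general {Ω : Type*} [MeasurableSpace Ω]
    (μ : Measure Ω) [IsProbabilityMeasure μ] (N : ℕ) (hN : 0 < N)
    (h J : ℝ) (hJ : 0 < J) (MN W : Ω → ℝ) (hMN : Measurable MN)
    (hWm : Measurable W) (hindep : IndepFun W MN μ)
    (hlawM : μ.map MN = monomerLaw N h J)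
    (hlawW : μ.map W = gaussianReal 0 (Real.toNNReal (2 * J)⁻¹))
    (η u : ℝ) :
    ∃ c : ℝ, 0 < c ∧
      μ.map (fun ω => W ω / (N : ℝ) ^ ((1 : ℝ) / 2 - η)
          + (MN ω - N * u) / (N : ℝ) ^ ((1 : ℝ) - η))
        = volume.withDensity
            (fun x => ENNReal.ofReal
              (c * Real.exp (N * ptildeN N h J (x / (N : ℝ) ^ η + u)))) := by
  have hNR : (0 : ℝ) < N := by exact_mod_cast hN
  set A := (N : ℝ) ^ ((1 : ℝ) / 2 - η)
  set P := (N : ℝ) ^ η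
  have hAP : A ^ 2 * P ^ 2 = N := by
    rw [← mul_pow, ← Real.rpow_add hNR, ← Real.rpow_natCast, ← Real.rpow_mul hNR.le]
    norm_num
  have hBP : (N : ℝ) ^ ((1 : ℝ) - η) * P = N := by rw [← Real.rpow_add hNR]; norm_num
  set σ := Real.toNNReal (2 * J)⁻¹ / NNReal.mk (A ^ 2) (sq_nonneg A) with hσ_def
  have hσ : (σ : ℝ) * (2 * J * N) = P ^ 2 := by
    have : A ≠ 0 := by positivity
    rw [hσ_def, NNReal.coe_div, NNReal.coe_mk, Real.coe_toNNReal _ (by positivity), ← hAP]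
    field_simp
  have hlawW' : μ.map (fun ω => W ω / A) = gaussianReal 0 σ := by
    rw [← zero_div A, ← gaussianReal_map_div_const, ← hlawW]
    exact (Measure.map_map (measurable_div_const A) hWm).symm
  exact exists_map_add_eq_withDensity_exp_ptildeN hN.ne' hJ.ne' (by positivity) hBP hσ
    (hWm.div_const A) hMN (hindep.comp (measurable_div_const A) measurable_id) hlawW' hlawM

/-- Gaussian convolution identity: if `W ~ N(0,(2J)⁻¹)` is
independent of the number of monomers `M_N`, then the law of
`W/N^{1/2−η} + (M_N − Nu)/N^{1−η}` has density proportional to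
`exp(N p̃_N(x/N^η + u))` with respect to Lebesgue measure. -/
theorem gaussian_convolution_identity {Ω : Type*} [MeasurableSpace Ω]
    (μ : Measure Ω) [IsProbabilityMeasure μ] (N : ℕ) (hN : 0 < N)
    (h J : ℝ) (hJ : 0 < J) (MN W : Ω → ℝ) (hMN : Measurable MN)
    (hWm : Measurable W) (hindep : IndepFun W MN μ)
    (hlawM : μ.map MN = monomerLaw N h J)
    (hlawW : μ.map W = gaussianReal 0 (Real.toNNReal (2 * J)⁻¹))
    (η u : ℝ) (hη : 0 ≤ η) :
    ∃ c : ℝ, 0 < c ∧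
      μ.map (fun ω => W ω / (N : ℝ) ^ ((1 : ℝ) / 2 - η)
          + (MN ω - N * u) / (N : ℝ) ^ ((1 : ℝ) - η))
        = volume.withDensity
            (fun x => ENNReal.ofReal
              (c * Real.exp (N * ptildeN N h J (x / (N : ℝ) ^ η + u)))) :=
  gaussian_convolution_identity_general μ N hN h J hJ MN W hMN hWm hindep hlawM hlawW η u
end
end
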